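/- arXiv:2008.08646 — 2 statements merged into one kernel-verified Lean document; each statement's English description precedes it below -/
import Mathlib

section
/- For every simple digraph Γ, th(Γ) = th(Γᵀ), where Γᵀ is the transpose of Γ obtained by reversing all arcs. -/
open Set

/-- One time step of standard zero forcing on a digraph with arc relation `A`:
every blue vertex having a unique white out-neighbor forces it blue. -/
def dstep {V : Type*} (A : V → V → Prop) (S : Set V) : Set V :=
  S ∪ {w | ∃ u ∈ S, A u w ∧ ∀ x, A u x → x ∉ S → x = w}

/-- `B` is a zero forcing set of the digraph with arc relation `A`. -/
def IsZFS {V : Type*} (A : V → V → Prop) (B : Set V) : Prop :=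
  ∃ t, (dstep A)^[t] B = Set.univ

/-- Propagation time of `B` in the digraph with arc relation `A`. -/
noncomputable def dpt {V : Type*} (A : V → V → Prop) (B : Set V) : ℕ :=
  sInf {t | (dstep A)^[t] B = Set.univ}

/-- The throttling number of the digraph with arc relation `A`. -/
noncomputable def dth {V : Type*} (A : V → V → Prop) : ℕ :=
  sInf {k | ∃ B : Set V, IsZFS A B ∧ k = B.ncard + dpt A B}

/-!
Record, for a zero forcing set `B` that colours everything in `t` steps, the time at which each
vertex turns blue and a vertex forcing it. The forcing map is injective off `B`, so the vertices
forcing nobody number at most `|B|`. Running the forces backwards in the transpose, with time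
reversed, these terminal vertices again colour everything in `t` steps. Applying this to an
optimal `B` gives `th(Γᵀ) ≤ th(Γ)`, and symmetry gives equality.
-/

section ZeroForcing

variable {V : Type*} (A : V → V → Prop)

lemma subset_dstep (S : Set V) : S ⊆ dstep A S :=
  subset_union_left

lemma dstep_mono : Monotone (dstep A) := by
  rintro S T hST w (hw | ⟨u, hu, huw, huniq⟩)
  · exact Or.inl (hST hw)
  · exact Or.inr ⟨u, hST hu, huw, fun x hux hxT => huniq x hux fun hxS => hxT (hST hxS)⟩

lemma monotone_iterate_dstep (B : Set V) : Monotone fun i => (dstep A)^[i] B :=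
  (dstep_mono A).monotone_iterate_of_le_map (subset_dstep A B)

noncomputable def forcingTime (B : Set V) (v : V) : ℕ :=
  sInf {i | v ∈ (dstep A)^[i] B}

variable {A} {B : Set V}

lemma mem_iterate_dstep_iff (hB : IsZFS A B) {v : V} {i : ℕ} :
    v ∈ (dstep A)^[i] B ↔ forcingTime A B v ≤ i := by
  refine ⟨fun h => Nat.sInf_le h, fun h => monotone_iterate_dstep A B h ?_⟩
  obtain ⟨t, ht⟩ := hB
  exact Nat.sInf_mem (s := {i | v ∈ (dstep A)^[i] B}) ⟨t, by simp [ht]⟩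

lemma exists_forcer (hB : IsZFS A B) {v : V} (hv : v ∉ B) :
    ∃ u, forcingTime A B u < forcingTime A B v ∧ A u v ∧
      ∀ x, A u x → forcingTime A B v ≤ forcingTime A B x → x = v := by
  have hpos : forcingTime A B v ≠ 0 := fun h0 =>
    hv ((mem_iterate_dstep_iff hB (i := 0)).2 h0.le)
  obtain ⟨n, hn⟩ := Nat.exists_eq_succ_of_ne_zero hpos
  have hmem : v ∈ dstep A ((dstep A)^[n] B) := by
    rw [← Function.iterate_succ_apply' (dstep A), mem_iterate_dstep_iff hB, hn]
  have hnot : v ∉ (dstep A)^[n] B := by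
    rw [mem_iterate_dstep_iff hB]
    omega
  obtain ⟨u, hu, huv, huniq⟩ := hmem.resolve_left hnot
  rw [mem_iterate_dstep_iff hB] at hu
  refine ⟨u, by omega, huv, fun x hux hvx => huniq x hux ?_⟩
  rw [mem_iterate_dstep_iff hB]
  omega

/-- A chronological list of forces from `B`: `forcer v` forces `v` at time `time v`. -/
structure ForcingChronology (A : V → V → Prop) (B : Set V) where
  time : V → ℕ
  forcer : V → V
  time_forcer_lt : ∀ v ∉ B, time (forcer v) < time v
  adj_forcer : ∀ v ∉ B, A (forcer v) v
  eq_of_adj_forcer : ∀ v ∉ B, ∀ x, A (forcer v) x → time v ≤ time x → x = v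

namespace ForcingChronology

variable (c : ForcingChronology A B)

noncomputable def ofIsZFS (hB : IsZFS A B) : ForcingChronology A B := by
  classical
  exact
  { time := forcingTime A B
    forcer := fun v => if hv : v ∉ B then (exists_forcer hB hv).choose else v
    time_forcer_lt := fun v hv => by simpa [hv] using (exists_forcer hB hv).choose_spec.1
    adj_forcer := fun v hv => by simpa [hv] using (exists_forcer hB hv).choose_spec.2.1
    eq_of_adj_forcer := fun v hv => by simpa [hv] using (exists_forcer hB hv).choose_spec.2.2 }

def terminal : Set V :=
  {u | ∀ v ∉ B, c.forcer v ≠ u}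

lemma injOn_forcer : InjOn c.forcer Bᶜ := by
  intro a ha b hb hab
  rcases le_total (c.time a) (c.time b) with h | h
  · exact (c.eq_of_adj_forcer a ha b (hab ▸ c.adj_forcer b hb) h).symm
  · exact c.eq_of_adj_forcer b hb a (hab ▸ c.adj_forcer a ha) h

lemma ncard_terminal_le [Finite V] : c.terminal.ncard ≤ B.ncard := by
  have hmaps : MapsTo c.forcer Bᶜ c.terminalᶜ := fun v hv hT => hT v hv rfl
  have hcompl : (Bᶜ).ncard ≤ (c.terminalᶜ).ncard :=
    ncard_le_ncard_of_injOn c.forcer hmaps c.injOn_forcer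
  have := ncard_add_ncard_compl B
  have := ncard_add_ncard_compl c.terminal
  omega

/-- Vertices all of whose forces happen after time `t - j`: in the transpose, started from the
terminal vertices, these are blue after `j` steps. -/
def reversedBlue (t j : ℕ) : Set V :=
  {u | ∀ v ∉ B, c.forcer v = u → t - j < c.time v}

lemma reversedBlue_zero_subset {t : ℕ} (ht : ∀ v, c.time v ≤ t) :
    c.reversedBlue t 0 ⊆ c.terminal := fun u hu v hv hvu => by
  have := hu v hv hvu
  have := ht v
  omega

lemma reversedBlue_eq_univ (t : ℕ) : c.reversedBlue t t = univ :=
  eq_univ_of_forall fun _ v hv _ => by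
    have := c.time_forcer_lt v hv
    omega

/-- If `u` forced `v` at time `t - j`, then in the transpose `v` forces `u` at step `j + 1`. -/
lemma reversedBlue_succ_subset (t j : ℕ) :
    c.reversedBlue t (j + 1) ⊆ dstep (flip A) (c.reversedBlue t j) := by
  intro u hu
  by_cases hj : u ∈ c.reversedBlue t j
  · exact Or.inl hj
  obtain ⟨v, hv, rfl, hvt⟩ : ∃ v ∉ B, c.forcer v = u ∧ c.time v ≤ t - j := by
    simpa [reversedBlue] using hj
  have htime : c.time v = t - j := by
    have := hu v hv rfl
    omega
  refine Or.inr ⟨v, fun v' hv' hv'v => ?_, c.adj_forcer v hv, fun x hxv hx => ?_⟩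
  · have := c.time_forcer_lt v' hv'
    rw [hv'v] at this
    omega
  · obtain ⟨y, hy, rfl, hyt⟩ : ∃ y ∉ B, c.forcer y = x ∧ c.time y ≤ t - j := by
      simpa [reversedBlue] using hx
    rw [c.eq_of_adj_forcer y hy v hxv (by omega)]

lemma iterate_dstep_flip_terminal {t : ℕ} (ht : ∀ v, c.time v ≤ t) :
    (dstep (flip A))^[t] c.terminal = univ := by
  refine eq_univ_of_univ_subset ?_
  rw [← c.reversedBlue_eq_univ t]
  exact (dstep_mono (flip A)).seq_le_seq (y := fun j => (dstep (flip A))^[j] c.terminal) t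
    (c.reversedBlue_zero_subset ht) (fun j _ => c.reversedBlue_succ_subset t j)
    (fun j _ => (Function.iterate_succ_apply' _ _ _).ge)

end ForcingChronology

lemma exists_iterate_dstep_flip_eq_univ [Finite V] {t : ℕ} (ht : (dstep A)^[t] B = univ) :
    ∃ B' : Set V, (dstep (flip A))^[t] B' = univ ∧ B'.ncard ≤ B.ncard := by
  let c := ForcingChronology.ofIsZFS ⟨t, ht⟩
  have htime : ∀ v, c.time v ≤ t := fun v => Nat.sInf_le (by simp [ht])
  exact ⟨c.terminal, c.iterate_dstep_flip_terminal htime, c.ncard_terminal_le⟩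

lemma iterate_dpt_eq_univ (hB : IsZFS A B) : (dstep A)^[dpt A B] B = univ :=
  Nat.sInf_mem hB

lemma dpt_le {t : ℕ} (ht : (dstep A)^[t] B = univ) : dpt A B ≤ t :=
  Nat.sInf_le ht

lemma dth_le (hB : IsZFS A B) : dth A ≤ B.ncard + dpt A B :=
  Nat.sInf_le ⟨B, hB, rfl⟩

variable (A) in
lemma exists_isZFS_dth_eq : ∃ B : Set V, IsZFS A B ∧ dth A = B.ncard + dpt A B :=
  Nat.sInf_mem (s := {k | ∃ B : Set V, IsZFS A B ∧ k = B.ncard + dpt A B})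
    ⟨_, univ, ⟨0, rfl⟩, rfl⟩

variable (A) in
lemma dth_flip_le [Finite V] : dth (flip A) ≤ dth A := by
  obtain ⟨B, hB, hdth⟩ := exists_isZFS_dth_eq A
  obtain ⟨B', hB', hcard⟩ := exists_iterate_dstep_flip_eq_univ (iterate_dpt_eq_univ hB)
  calc dth (flip A) ≤ B'.ncard + dpt (flip A) B' := dth_le ⟨_, hB'⟩
    _ ≤ B.ncard + dpt A B := add_le_add hcard (dpt_le hB')
    _ = dth A := hdth.symm

end ZeroForcing

theorem stmt2_general {V : Type*} [Fintype V] (A : V → V → Prop) :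
    dth A = dth (flip A) :=
  le_antisymm (dth_flip_le (flip A)) (dth_flip_le A)

/-- The throttling number of a simple digraph equals that of its transpose. -/
theorem stmt2 {V : Type*} [Fintype V] (A : V → V → Prop) (hirr : Irreflexive A) :
    dth A = dth (flip A) :=
  stmt2_general A
end

section
/- The tournament K⃗ₙ on vertices v₀,…,v_{n−1} with arcs (v_i,v_j) for all i > j satisfies th(K⃗ₙ) = n. -/
open Set

/-!
In the transitive tournament a vertex `u` can force `w` only if every out-neighbour of `u`
other than `w` is already blue, and all vertices below `u` are out-neighbours of `u`; so two
vertices turned blue in the same step would each lie below the other's forcer, and they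
coincide. Hence the blue set grows by at most one vertex per step, which forces
`|B| + pt(B) ≥ n` for every zero forcing set `B`, while `B = V` attains `n`.
-/

section Throttling

variable {V : Type*} (A : V → V → Prop)

lemma ncard_iterate_le_of_ncard_le_succ {f : Set V → Set V}
    (hf : ∀ S, (f S).ncard ≤ S.ncard + 1) (S : Set V) (t : ℕ) :
    (f^[t] S).ncard ≤ S.ncard + t := by
  induction t with
  | zero => rfl
  | succ t ih =>
    rw [Function.iterate_succ_apply']
    exact (hf _).trans (by omega)

lemma iterate_dstep_dpt {B : Set V} (hB : IsZFS A B) :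
    (dstep A)^[dpt A B] B = univ :=
  Nat.sInf_mem hB

lemma dth_le_card [Finite V] : dth A ≤ Nat.card V := by
  refine Nat.sInf_le ⟨univ, ⟨0, rfl⟩, ?_⟩
  have hdpt : dpt A (univ : Set V) = 0 := Nat.sInf_eq_zero.mpr (Or.inl rfl)
  rw [hdpt, ncard_univ, add_zero]

theorem dth_eq_card_of_ncard_dstep_le [Finite V]
    (hA : ∀ S : Set V, (dstep A S).ncard ≤ S.ncard + 1) : dth A = Nat.card V := by
  refine (dth_le_card A).antisymm (le_csInf ⟨_, ⟨univ, ⟨0, rfl⟩, rfl⟩⟩ ?_)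
  rintro k ⟨B, hB, rfl⟩
  have hgrowth := ncard_iterate_le_of_ncard_le_succ hA B (dpt A B)
  rwa [iterate_dstep_dpt A hB, ncard_univ] at hgrowth

end Throttling

section TransitiveTournament

variable {V : Type*} [LinearOrder V]

lemma dstep_gt_sdiff_subsingleton (S : Set V) :
    (dstep (fun u w : V => w < u) S \ S).Subsingleton := by
  rintro w₁ ⟨hw₁ | ⟨u₁, -, hu₁w₁, hu₁⟩, hw₁S⟩ w₂ ⟨hw₂ | ⟨u₂, -, hu₂w₂, hu₂⟩, hw₂S⟩
  any_goals contradiction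
  rcases le_total w₁ w₂ with h | h
  · exact hu₂ w₁ (h.trans_lt hu₂w₂) hw₁S
  · exact (hu₁ w₂ (h.trans_lt hu₁w₁) hw₂S).symm

lemma ncard_dstep_gt_le [Finite V] (S : Set V) :
    (dstep (fun u w : V => w < u) S).ncard ≤ S.ncard + 1 := by
  calc (dstep (fun u w : V => w < u) S).ncard
      ≤ (dstep (fun u w : V => w < u) S \ S).ncard + S.ncard :=
        ncard_le_ncard_sdiff_add_ncard _ _
    _ ≤ S.ncard + 1 := by
        have := ncard_le_one_iff_subsingleton.mpr (dstep_gt_sdiff_subsingleton S)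
        omega

theorem dth_gt_eq_card [Finite V] : dth (fun u w : V => w < u) = Nat.card V :=
  dth_eq_card_of_ncard_dstep_le _ ncard_dstep_gt_le

end TransitiveTournament

/-- The tournament on `v₀, …, v_{n-1}` with all arcs `(vᵢ, vⱼ)` for `i > j` has
throttling number `n`. -/
theorem stmt14 (n : ℕ) :
    dth (fun i j : Fin n => (j : ℕ) < (i : ℕ)) = n := by
  simpa using dth_gt_eq_card (V := Fin n)
end
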